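/- For every n ≥ 1 and every arc ℓ of M̄_n, the set {ℓ} is connected; that is, the graph with vertex set R({ℓ}) = {ℓ⟦m⟧ : m ∈ ℤ} and edge relation ~ is connected. (Equivalently: every indecomposable object of the Paquette–Yıldırım category C̄_n is homologically connected.) -/

import Mathlib

/-! Combinatorial model of the Paquette–Yıldırım completed cluster category `C̄ₙ`.

The set of marked points `M̄ₙ` consists of the marked points `(k, i)` (the `k`-th marked
point of the `i`-th segment, for `i : Fin n`) together with the accumulation points
(indexed by `Fin n`; `Sum.inr i` is the accumulation point `a_{i+1}` of the paper). -/

/-- The marked points of `M̄ₙ`: `Sum.inl (k, i)` is a marked point of a segment,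
`Sum.inr i` is an accumulation point. -/
abbrev MbarPt (n : ℕ) := (ℤ × Fin n) ⊕ Fin n

/-- The injection of `M̄ₙ` into the circle `ℝ/nℤ`, given by representatives in `[0, n)`:
the accumulation point `i` goes to `i`, and the marked point `(k, i)` goes to
`i + 1/2 + k/(2(|k|+1))`. -/
noncomputable def toCircle {n : ℕ} : MbarPt n → ℝ
  | Sum.inl (k, i) => (i : ℝ) + 1 / 2 + (k : ℝ) / (2 * (|(k : ℝ)| + 1))
  | Sum.inr i => (i : ℝ)

/-- `y` lies strictly between `x` and `z` in the cyclic order on `M̄ₙ` (going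
counterclockwise from `x` to `z`), expressed via the representatives in `[0, n)`. -/
def CycSBtw {n : ℕ} (x y z : MbarPt n) : Prop :=
  (toCircle x < toCircle y ∧ toCircle y < toCircle z) ∨
  (toCircle y < toCircle z ∧ toCircle z < toCircle x) ∨
  (toCircle z < toCircle x ∧ toCircle x < toCircle y)

/-- An arc of `M̄ₙ` is an unordered pair of distinct points of `M̄ₙ` which is not a pair
of consecutive marked points `{(k,i), (k+1,i)}` of a segment. -/
def IsArc {n : ℕ} (p : Sym2 (MbarPt n)) : Prop :=
  ¬ p.IsDiag ∧ ∀ (k : ℤ) (i : Fin n),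
    p ≠ s(Sum.inl (k, i), Sum.inl (k + 1, i))

/-- The `m`-fold clockwise rotation of a point: marked points `(k, i)` move to `(k - m, i)`,
accumulation points are fixed. -/
def rotPt {n : ℕ} (m : ℤ) : MbarPt n → MbarPt n
  | Sum.inl (k, i) => Sum.inl (k - m, i)
  | Sum.inr i => Sum.inr i

/-- The `m`-fold clockwise rotation `ℓ⟦m⟧` of an arc. -/
def rotArc {n : ℕ} (m : ℤ) (p : Sym2 (MbarPt n)) : Sym2 (MbarPt n) :=
  Sym2.map (rotPt m) p

/-- `p` and `q` are rotations of one another. -/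
def SameRot {n : ℕ} (p q : Sym2 (MbarPt n)) : Prop :=
  ∃ m : ℤ, p = rotArc m q

/-- The rotation closure `R(S)` of a set of arcs `S`. -/
def RClos {n : ℕ} (S : Set (Sym2 (MbarPt n))) : Set (Sym2 (MbarPt n)) :=
  {q | ∃ p ∈ S, ∃ m : ℤ, q = rotArc m p}

/-- Two arcs cross if their endpoints alternate in the cyclic order: exactly one
endpoint of one lies strictly between the two endpoints of the other. -/
def Crosses {n : ℕ} (p q : Sym2 (MbarPt n)) : Prop :=
  ∃ x y z w : MbarPt n, p = s(x, y) ∧ q = s(z, w) ∧ CycSBtw x z y ∧ CycSBtw y w x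

/-- Adjacency `ℓ ~ ℓ'` of arcs: they cross, or they are distinct and share an endpoint
which is an accumulation point. -/
def Adj {n : ℕ} (p q : Sym2 (MbarPt n)) : Prop :=
  Crosses p q ∨ (p ≠ q ∧ ∃ i : Fin n, (Sum.inr i : MbarPt n) ∈ p ∧ (Sum.inr i : MbarPt n) ∈ q)

/-- Paths of length `m` in the graph with vertex set `T` and edge relation `Adj`. -/
def AdjChain {n : ℕ} (T : Set (Sym2 (MbarPt n))) : ℕ → Sym2 (MbarPt n) → Sym2 (MbarPt n) → Prop
  | 0, p, q => p = q
  | m + 1, p, q => ∃ r ∈ T, Adj p r ∧ AdjChain T m r q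

/-- `S` is connected: the graph with vertex set `R(S)` and edge relation `~` is connected. -/
def ConnectedArcs {n : ℕ} (S : Set (Sym2 (MbarPt n))) : Prop :=
  ∀ p ∈ RClos S, ∀ q ∈ RClos S, ∃ m : ℕ, AdjChain (RClos S) m p q

/-- `S` has complete orbit: every point of `M̄ₙ` is an endpoint of some arc of `R(S)`. -/
def CompleteOrbit {n : ℕ} (S : Set (Sym2 (MbarPt n))) : Prop :=
  ∀ x : MbarPt n, ∃ p ∈ RClos S, x ∈ p

/-- `S` is minimal: removing any arc of `S` destroys connectedness or completeness of orbit. -/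
def MinimalArcSet {n : ℕ} (S : Set (Sym2 (MbarPt n))) : Prop :=
  ∀ ℓ ∈ S, ¬ (ConnectedArcs (S \ {ℓ}) ∧ CompleteOrbit (S \ {ℓ}))

/-- The homological length of (a connected) `S` is at most `d`: any two vertices of
`R(S)` are joined by a `~`-path of length at most `d`. -/
def HLenLE {n : ℕ} (S : Set (Sym2 (MbarPt n))) (d : ℕ) : Prop :=
  ∀ p ∈ RClos S, ∀ q ∈ RClos S, ∃ m ≤ d, AdjChain (RClos S) m p q

/-- The homological length of (a connected) `S` is exactly `d`: every pair of vertices of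
`R(S)` is joined by a path of length `≤ d`, and some pair admits no path of length `< d`. -/
def HLenEq {n : ℕ} (S : Set (Sym2 (MbarPt n))) (d : ℕ) : Prop :=
  HLenLE S d ∧ ∃ p ∈ RClos S, ∃ q ∈ RClos S, ∀ m < d, ¬ AdjChain (RClos S) m p q


/-! If `ℓ` has an accumulation point as an endpoint, so does every rotation of `ℓ`, hence any
two distinct arcs of `R({ℓ})` are adjacent. Otherwise both endpoints `x, y` are marked points,
and since `ℓ` is an arc they can be labelled so that `x⟦m⟧` precedes `y⟦m+1⟧` for every `m`
(they lie on different segments, or on one segment at distance at least two). Then `ℓ⟦a⟧`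
crosses `ℓ⟦a+1⟧` for every `a`, and consecutive rotations give a path between any two
vertices of `R({ℓ})`. -/

lemma strictMono_div_two_mul_abs_add_one : StrictMono fun t : ℝ => t / (2 * (|t| + 1)) := by
  intro a b hab
  dsimp only
  rw [div_lt_div_iff₀ (by positivity) (by positivity)]
  rcases abs_cases a with ⟨ha, _⟩ | ⟨ha, _⟩ <;> rcases abs_cases b with ⟨hb, _⟩ | ⟨hb, _⟩ <;>
    rw [ha, hb] <;> nlinarith

lemma abs_div_two_mul_abs_add_one_lt_half (t : ℝ) : |t / (2 * (|t| + 1))| < 1 / 2 := by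
  rw [abs_div, abs_of_pos (by positivity : (0 : ℝ) < 2 * (|t| + 1)),
    div_lt_iff₀ (by positivity)]
  linarith

section

variable {n : ℕ}

lemma toCircle_inl_strictMono (i : Fin n) :
    StrictMono fun k : ℤ => toCircle (Sum.inl (k, i) : MbarPt n) := fun a b hab => by
  simpa [toCircle] using strictMono_div_two_mul_abs_add_one (Int.cast_lt.mpr hab)

lemma toCircle_inl_mem_Ioo (k : ℤ) (i : Fin n) :
    toCircle (Sum.inl (k, i) : MbarPt n) ∈ Set.Ioo (i : ℝ) (i + 1) := by
  have := abs_lt.mp (abs_div_two_mul_abs_add_one_lt_half (k : ℝ))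
  constructor <;> simp only [toCircle] <;> linarith [this.1, this.2]

lemma toCircle_inl_lt_of_lt (k k' : ℤ) {i j : Fin n} (hij : i < j) :
    toCircle (Sum.inl (k, i) : MbarPt n) < toCircle (Sum.inl (k', j)) := by
  have hij' : (i : ℝ) + 1 ≤ j := by exact_mod_cast (hij : (i : ℕ) < j)
  linarith [(toCircle_inl_mem_Ioo k i).2, (toCircle_inl_mem_Ioo k' j).1]

lemma cycSBtw_of_alternate {x y z w : MbarPt n} (h₁ : CycSBtw x z y) (h₂ : CycSBtw y w x) :
    CycSBtw z y w := by
  unfold CycSBtw at *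
  rcases h₁ with ⟨_, _⟩ | ⟨_, _⟩ | ⟨_, _⟩ <;> rcases h₂ with ⟨_, _⟩ | ⟨_, _⟩ | ⟨_, _⟩ <;>
    first
    | (exfalso; linarith)
    | (left; constructor <;> linarith)
    | (right; left; constructor <;> linarith)
    | (right; right; constructor <;> linarith)

lemma Crosses.symm {p q : Sym2 (MbarPt n)} (h : Crosses p q) : Crosses q p := by
  obtain ⟨x, y, z, w, rfl, rfl, h₁, h₂⟩ := h
  exact ⟨z, w, y, x, rfl, Sym2.eq_swap, cycSBtw_of_alternate h₁ h₂, cycSBtw_of_alternate h₂ h₁⟩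

lemma Adj.symm {p q : Sym2 (MbarPt n)} (h : Adj p q) : Adj q p :=
  h.imp Crosses.symm fun ⟨hpq, i, hp, hq⟩ => ⟨hpq.symm, i, hq, hp⟩

lemma crosses_of_lt_of_lt_of_lt {x y z w : MbarPt n} (hwx : toCircle w < toCircle x)
    (hxz : toCircle x < toCircle z) (hzy : toCircle z < toCircle y) : Crosses s(x, y) s(z, w) :=
  ⟨x, y, z, w, rfl, rfl, Or.inl ⟨hxz, hzy⟩, Or.inr (Or.inl ⟨hwx, hxz.trans hzy⟩)⟩

lemma rotArc_mk (m : ℤ) (x y : MbarPt n) : rotArc m s(x, y) = s(rotPt m x, rotPt m y) :=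
  Sym2.map_mk _ _ _

lemma mem_rClos_singleton {ℓ p : Sym2 (MbarPt n)} : p ∈ RClos {ℓ} ↔ ∃ m : ℤ, p = rotArc m ℓ := by
  simp [RClos]

lemma exists_adjChain_of_reflTransGen {T : Set (Sym2 (MbarPt n))} {p q : Sym2 (MbarPt n)}
    (h : Relation.ReflTransGen (fun p r => r ∈ T ∧ Adj p r) p q) : ∃ m, AdjChain T m p q := by
  induction h using Relation.ReflTransGen.head_induction_on with
  | refl => exact ⟨0, rfl⟩
  | head hpr _ ih =>
    obtain ⟨m, hm⟩ := ih
    exact ⟨m + 1, _, hpr.1, hpr.2, hm⟩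

lemma connectedArcs_singleton_of_adj_rotArc_succ {ℓ : Sym2 (MbarPt n)}
    (h : ∀ a : ℤ, Adj (rotArc a ℓ) (rotArc (a + 1) ℓ)) : ConnectedArcs {ℓ} := by
  intro p hp q hq
  obtain ⟨a, rfl⟩ := mem_rClos_singleton.mp hp
  obtain ⟨b, rfl⟩ := mem_rClos_singleton.mp hq
  apply exists_adjChain_of_reflTransGen
  refine Relation.ReflTransGen.lift (fun c => rotArc c ℓ) (r := fun c d =>
    Adj (rotArc c ℓ) (rotArc d ℓ)) (fun c d hcd => ⟨mem_rClos_singleton.mpr ⟨d, rfl⟩, hcd⟩) _ _ ?_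
  refine reflTransGen_of_succ _ (fun c _ => ?_) (fun c _ => ?_) <;>
    rw [Order.succ_eq_add_one]
  exacts [h c, (h c).symm]

lemma connectedArcs_singleton_of_inr_mem {ℓ : Sym2 (MbarPt n)} {i : Fin n}
    (hi : (Sum.inr i : MbarPt n) ∈ ℓ) : ConnectedArcs {ℓ} := by
  intro p hp q hq
  obtain ⟨a, rfl⟩ := mem_rClos_singleton.mp hp
  obtain ⟨b, rfl⟩ := mem_rClos_singleton.mp hq
  have hrot : ∀ m : ℤ, (Sum.inr i : MbarPt n) ∈ rotArc m ℓ := fun m =>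
    Sym2.mem_map.mpr ⟨_, hi, rfl⟩
  by_cases hab : rotArc a ℓ = rotArc b ℓ
  · exact ⟨0, hab⟩
  · exact ⟨1, _, mem_rClos_singleton.mpr ⟨b, rfl⟩, Or.inr ⟨hab, i, hrot a, hrot b⟩, rfl⟩

lemma adj_rotArc_succ_of_forall_lt {k k' : ℤ} {i j : Fin n}
    (h : ∀ m : ℤ, toCircle (Sum.inl (k - m, i) : MbarPt n) <
      toCircle (Sum.inl (k' - (m + 1), j) : MbarPt n)) (a : ℤ) :
    Adj (rotArc a s(Sum.inl (k, i), Sum.inl (k', j)))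
      (rotArc (a + 1) s(Sum.inl (k, i), Sum.inl (k', j))) := by
  -- the endpoints occur in the order `(k-a-1, i) < (k-a, i) < (k'-a-1, j) < (k'-a, j)`
  simp only [rotArc_mk, rotPt]
  rw [Sym2.eq_swap (a := Sum.inl (k - (a + 1), i))]
  exact Or.inl (crosses_of_lt_of_lt_of_lt (toCircle_inl_strictMono i (by omega)) (h a)
    (toCircle_inl_strictMono j (by omega)))

lemma IsArc.forall_toCircle_lt {k k' : ℤ} {i j : Fin n}
    (hℓ : IsArc s((Sum.inl (k, i) : MbarPt n), Sum.inl (k', j))) :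
    (∀ m : ℤ, toCircle (Sum.inl (k - m, i) : MbarPt n) <
      toCircle (Sum.inl (k' - (m + 1), j) : MbarPt n)) ∨
    (∀ m : ℤ, toCircle (Sum.inl (k' - m, j) : MbarPt n) <
      toCircle (Sum.inl (k - (m + 1), i) : MbarPt n)) := by
  obtain ⟨hdiag, hcons⟩ := hℓ
  rcases lt_trichotomy i j with hij | rfl | hij
  · exact Or.inl fun m => toCircle_inl_lt_of_lt _ _ hij
  · have hne : k ≠ k' := by rintro rfl; exact hdiag rfl
    have h₁ : k' ≠ k + 1 := by rintro rfl; exact hcons k i rfl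
    have h₂ : k ≠ k' + 1 := by rintro rfl; exact hcons k' i Sym2.eq_swap
    rcases (by omega : k + 2 ≤ k' ∨ k' + 2 ≤ k) with h | h
    · exact Or.inl fun m => toCircle_inl_strictMono i (by omega)
    · exact Or.inr fun m => toCircle_inl_strictMono i (by omega)
  · exact Or.inr fun m => toCircle_inl_lt_of_lt _ _ hij

end

theorem every_arc_is_homologically_connected_general (n : ℕ)
    (ℓ : Sym2 (MbarPt n)) (hℓ : IsArc ℓ) :
    ConnectedArcs ({ℓ} : Set (Sym2 (MbarPt n))) := by
  induction ℓ using Sym2.ind with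
  | _ x y =>
  rcases x with ⟨k, i⟩ | i
  · rcases y with ⟨k', j⟩ | j
    · rcases hℓ.forall_toCircle_lt with h | h
      · exact connectedArcs_singleton_of_adj_rotArc_succ (adj_rotArc_succ_of_forall_lt h)
      · rw [Sym2.eq_swap]
        exact connectedArcs_singleton_of_adj_rotArc_succ (adj_rotArc_succ_of_forall_lt h)
    · exact connectedArcs_singleton_of_inr_mem (Sym2.mem_mk_right _ _)
  · exact connectedArcs_singleton_of_inr_mem (Sym2.mem_mk_left _ _)

/-- Proposition 3.8 of the paper: for every `n ≥ 1` and every arc `ℓ`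
of `M̄ₙ`, the set `{ℓ}` is connected, i.e. the graph with vertex set
`R({ℓ}) = {ℓ⟦m⟧ : m ∈ ℤ}` and edge relation `~` is connected. Equivalently, every
indecomposable object of the Paquette–Yıldırım category `C̄ₙ` is homologically connected. -/
theorem every_arc_is_homologically_connected (n : ℕ) (hn : 1 ≤ n)
    (ℓ : Sym2 (MbarPt n)) (hℓ : IsArc ℓ) :
    ConnectedArcs ({ℓ} : Set (Sym2 (MbarPt n))) :=
  every_arc_is_homologically_connected_general n ℓ hℓ
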